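/- arXiv:2011.00357 — 3 statements merged into one kernel-verified Lean document; each statement's English description precedes it below -/
import Mathlib

section
/- Let C be a commutative ring that is finitely generated as a ℤ-algebra, and let x ∈ C be a nonzero element. Then there exists an ideal L of C such that x ∉ L and such that the quotient ring C/L is finite. -/
/-!
Pick a maximal ideal `m` containing the annihilator of `x`; by Krull's intersection theorem
`x ∉ m ^ n` for some `n`. The residue field `C ⧸ m` is a field of finite type over the Jacobson
ring `ℤ`, hence a finite `ℤ`-module by the Nullstellensatz; being a field integral over `ℤ` it has
positive characteristic, so it is finite. Since `m` is finitely generated, `C ⧸ m ^ n` is then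
finite as well.
-/

theorem Int.jacobson_bot : (⊥ : Ideal ℤ).jacobson = ⊥ := by
  refine le_bot_iff.mp fun x hx => ?_
  have h₁ := Ideal.mem_jacobson_bot.mp hx 1
  have h₂ := Ideal.mem_jacobson_bot.mp hx (-1)
  rw [Int.isUnit_iff] at h₁ h₂
  rw [Ideal.mem_bot]
  omega

theorem IsPrincipalIdealRing.isJacobsonRing_of_jacobson_bot {R : Type*} [CommRing R] [IsDomain R]
    [IsPrincipalIdealRing R] (h : (⊥ : Ideal R).jacobson = ⊥) : IsJacobsonRing R := by
  refine isJacobsonRing_iff_prime_eq.mpr fun P hP => ?_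
  rcases eq_or_ne P ⊥ with rfl | hP₀
  · exact h
  · have := IsPrime.to_maximal_ideal hP₀
    exact Ideal.jacobson_eq_self_of_isMaximal

instance Int.isJacobsonRing : IsJacobsonRing ℤ :=
  IsPrincipalIdealRing.isJacobsonRing_of_jacobson_bot Int.jacobson_bot

theorem ringChar_ne_zero_of_isIntegral_int (K : Type*) [Field K] [Algebra.IsIntegral ℤ K] :
    ringChar K ≠ 0 := by
  intro h
  have : CharZero K := (CharP.ringChar_zero_iff_CharZero K).mp h
  exact Int.not_isField <|
    isField_of_isIntegral_of_isField (algebraMap ℤ K).injective_int (Field.toIsField K)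

theorem finite_of_moduleFinite_int (K : Type*) [Field K] [Module.Finite ℤ K] : Finite K := by
  have hp := ringChar_ne_zero_of_isIntegral_int K
  refine Module.finite_of_fg_torsion K fun y => ⟨⟨ringChar K, ?_⟩, ?_⟩
  · exact mem_nonZeroDivisors_of_ne_zero (mod_cast hp)
  · rw [Submonoid.mk_smul, zsmul_eq_mul, Int.cast_natCast, ringChar.Nat.cast_ringChar, zero_mul]

theorem Ideal.finite_quotient_of_isMaximal_of_finiteType_int {C : Type*} [CommRing C]
    [Algebra.FiniteType ℤ C] (m : Ideal C) [m.IsMaximal] : Finite (C ⧸ m) := by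
  let := Ideal.Quotient.field m
  have : Algebra.FiniteType ℤ (C ⧸ m) :=
    .of_surjective (Ideal.Quotient.mkₐ ℤ m) (Ideal.Quotient.mkₐ_surjective ℤ m)
  have := finite_of_finite_type_of_isJacobsonRing ℤ (C ⧸ m)
  exact finite_of_moduleFinite_int (C ⧸ m)

theorem exists_isMaximal_notMem_pow {R : Type*} [CommRing R] [IsNoetherianRing R] {x : R}
    (hx : x ≠ 0) : ∃ m : Ideal R, m.IsMaximal ∧ ∃ n, x ∉ m ^ n := by
  have hann : Ideal.torsionOf R R x ≠ ⊤ := by simpa [Ideal.torsionOf_eq_top_iff] using hx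
  obtain ⟨m, hm, hannm⟩ := Ideal.exists_le_maximal _ hann
  refine ⟨m, hm, ?_⟩
  by_contra! hxm
  have hx' : x ∈ (⨅ i : ℕ, m ^ i • ⊤ : Submodule R R) := by
    simpa only [Submodule.mem_iInf, smul_eq_mul, Ideal.mul_top] using hxm
  -- Krull's intersection theorem: `x = r • x` for some `r ∈ m`, so `1 - r` kills `x`.
  obtain ⟨r, hr⟩ := (Ideal.mem_iInf_smul_pow_eq_bot_iff m x).mp hx'
  have h₁ : 1 - (r : R) ∈ m := hannm <| by
    rw [Ideal.mem_torsionOf_iff, sub_smul, one_smul, hr, sub_self]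
  exact hm.ne_top <| (Ideal.eq_top_iff_one m).mpr <| by simpa using add_mem h₁ r.2

/-- Lemma 2.1: a finitely generated commutative ℤ-algebra is residually finite:
for every nonzero `x` there is an ideal `L` avoiding `x` with `C ⧸ L` finite. -/
theorem residually_finite_of_finiteType
    (C : Type*) [CommRing C] (hC : Algebra.FiniteType ℤ C)
    (x : C) (hx : x ≠ 0) :
    ∃ L : Ideal C, x ∉ L ∧ Finite (C ⧸ L) := by
  have := hC
  have : IsNoetherianRing C := Algebra.FiniteType.isNoetherianRing ℤ C
  obtain ⟨m, hm, n, hxn⟩ := exists_isMaximal_notMem_pow hx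
  have := m.finite_quotient_of_isMaximal_of_finiteType_int
  exact ⟨m ^ n, hxn, m.finite_quotient_pow (IsNoetherian.noetherian m) n⟩
end

section
/- Let m ≥ 2 and let c : S_m → ℤ be a function on the symmetric group on {1, …, m}, defining the homogeneous multilinear polynomial P(X_1, …, X_m) = Σ_{σ ∈ S_m} c_σ X_{σ(1)}⋯X_{σ(m)}. For 1 ≤ i < j ≤ m, set Θ_{i,j}(P) = Σ_{σ ∈ S_m, σ⁻¹(i) < σ⁻¹(j)} c_σ ∈ ℤ. Then there exists a noncommutative ring R such that Σ_{σ ∈ S_m} c_σ r_{σ(1)}⋯r_{σ(m)} = 0 for all r_1, …, r_m ∈ R if and only if there is a prime p such that (1) p divides P(1,1,…,1) = Σ_{σ ∈ S_m} c_σ and (2) p divides Θ_{i,j}(P) for all 1 ≤ i < j ≤ m. Moreover, if such a prime p exists, then P is a polynomial identity for the noncommutative ring 𝔽_p⟨U,V⟩/(U², V², UV). -/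
universe u

open FreeAlgebra

/-- The relation on `𝔽_p⟨U,V⟩` identifying `U²`, `V²` and `UV` with `0`. -/
def relUV (p : ℕ) : FreeAlgebra (ZMod p) (Fin 2) → FreeAlgebra (ZMod p) (Fin 2) → Prop :=
  fun a b => b = 0 ∧
    (a = ι (ZMod p) 0 ^ 2 ∨ a = ι (ZMod p) 1 ^ 2 ∨ a = ι (ZMod p) 0 * ι (ZMod p) 1)

/-- The ring `𝔽_p⟨U,V⟩/(U², V², UV)`. -/
abbrev UVRing (p : ℕ) := RingQuot (relUV p)

/-!
If `P` is an identity of a ring `R`, evaluating it at `(x, 1, …, 1)` gives `P(1, …, 1) • x = 0`,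
and evaluating it at `a`, `b` in places `i < j` and `1` elsewhere gives
`Θ_{i,j} • ab + (P(1, …, 1) - Θ_{i,j}) • ba = 0`, hence `Θ_{i,j} • (ab - ba) = 0`. So all these
integers lie in the annihilator of a nonzero commutator `ab - ba`, a proper ideal of `ℤ`, which is
contained in `pℤ` for some prime `p`.

Conversely, `𝔽_p⟨U,V⟩/(U², V², UV)` is spanned by `1, U, V, VU`, any product of three of
`U, V, VU` vanishes, and `VU ≠ 0 = UV`. By multilinearity it suffices to evaluate `P` on these
spanning elements. If three or more arguments differ from `1`, every monomial vanishes;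
otherwise the two formulas above show that the value is a multiple of `p`, hence zero.
-/

namespace List

variable {M : Type*} [Monoid M]

theorem prod_map_filter_of_eq_one {α : Type*} (l : List α) (p : α → Bool) {f : α → M}
    (h : ∀ x ∈ l, p x = false → f x = 1) : ((l.filter p).map f).prod = (l.map f).prod := by
  induction l with
  | nil => rfl
  | cons a l ih =>
    have ih' := ih fun x hx => h x (mem_cons_of_mem a hx)
    cases hp : p a
    · simp [hp, ih', h a mem_cons_self hp]
    · simp [hp, ih']

theorem prod_ofFn_eq_prod_map_of_pairwise {m : ℕ} {f : Fin m → M} {L : List (Fin m)}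
    (hL : L.Pairwise (· < ·)) (h : ∀ t ∉ L, f t = 1) : (ofFn f).prod = (L.map f).prod := by
  have hfilter : (finRange m).filter (· ∈ L) = L :=
    ((pairwise_lt_finRange m).filter _).eq_of_mem_iff hL (by simp)
  rw [ofFn_eq_map, ← prod_map_filter_of_eq_one _ (· ∈ L) fun t _ ht => h t (by simpa using ht),
    hfilter]

theorem prod_ofFn_of_eq_one_of_ne {m : ℕ} {f : Fin m → M} {s : Fin m}
    (h : ∀ t, t ≠ s → f t = 1) : (ofFn f).prod = f s := by
  simpa using prod_ofFn_eq_prod_map_of_pairwise (L := [s]) (by simp) (by simpa using h)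

theorem prod_ofFn_of_eq_one_of_ne_of_ne {m : ℕ} {f : Fin m → M} {s t : Fin m} (hst : s ≠ t)
    (h : ∀ k, k ≠ s → k ≠ t → f k = 1) :
    (ofFn f).prod = if s < t then f s * f t else f t * f s := by
  split_ifs with hlt
  · simpa using prod_ofFn_eq_prod_map_of_pairwise (L := [s, t]) (by simpa using hlt)
      (by simpa using h)
  · simpa using prod_ofFn_eq_prod_map_of_pairwise (L := [t, s])
      (by simpa using lt_of_le_of_ne (not_lt.1 hlt) hst.symm) (by simpa [and_comm] using h)

theorem prod_ofFn_eq_zero_of_three_le_ncard {M₀ : Type*} [MonoidWithZero M₀] {T : Set M₀}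
    (hT : ∀ x ∈ T, ∀ y ∈ T, ∀ z ∈ T, x * y * z = 0) {m : ℕ} {f : Fin m → M₀}
    (hf : ∀ t, f t = 1 ∨ f t ∈ T) (h3 : 3 ≤ {t | f t ≠ 1}.ncard) : (ofFn f).prod = 0 := by
  classical
  set L := (finRange m).filter (fun t => f t ≠ 1)
  have hlen : L.length = {t | f t ≠ 1}.ncard := by
    rw [← toFinset_card_of_nodup ((nodup_finRange m).filter _), ← Set.ncard_coe_finset]
    congr 1
    ext t
    simp
  have hmem : ∀ x ∈ L.map f, x ∈ T := by
    simp only [mem_map, mem_filter, L]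
    rintro _ ⟨t, ⟨-, ht⟩, rfl⟩
    exact (hf t).resolve_left (by simpa using ht)
  have hsorted : L.Pairwise (· < ·) := (pairwise_lt_finRange m).filter _
  rw [prod_ofFn_eq_prod_map_of_pairwise hsorted (fun t ht => by simpa [L] using ht)]
  match hL : L.map f, hmem with
  | x :: y :: z :: l, hxyz =>
    rw [prod_cons, prod_cons, prod_cons, ← mul_assoc, ← mul_assoc,
      hT x (hxyz x (by simp)) y (hxyz y (by simp)) z (hxyz z (by simp)), zero_mul]
  | [], _ | [_], _ | [_, _], _ =>
    have := congrArg length hL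
    simp only [length_map, length_nil, length_cons] at this
    omega

end List

open Finset

theorem MultilinearMap.eq_zero_of_span_eq_top {R M N ι κ : Type*} [CommSemiring R]
    [AddCommMonoid M] [AddCommMonoid N] [Module R M] [Module R N] [Fintype ι] [DecidableEq ι]
    [Fintype κ] {f : MultilinearMap R (fun _ : ι => M) N} {b : κ → M}
    (hb : Submodule.span R (Set.range b) = ⊤) (h : ∀ J : ι → κ, f (b ∘ J) = 0) : f = 0 := by
  ext r
  choose a ha using fun i => (Submodule.mem_span_range_iff_exists_fun R).1
    (hb ▸ Submodule.mem_top : r i ∈ Submodule.span R (Set.range b))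
  rw [zero_apply, ← funext ha, MultilinearMap.map_sum]
  exact sum_eq_zero fun J _ => by
    rw [MultilinearMap.map_smul_univ, ← Function.comp_def, h J, smul_zero]

theorem Int.exists_prime_forall_dvd_of_ne_top {I : Ideal ℤ} (hI : I ≠ ⊤) :
    ∃ p : ℕ, p.Prime ∧ ∀ n ∈ I, (p : ℤ) ∣ n := by
  have hunit : ¬ IsUnit (Submodule.IsPrincipal.generator I) := by
    rwa [← Ideal.span_singleton_eq_top, Ideal.span_singleton_generator]
  obtain ⟨p, hp, hpg⟩ := Nat.exists_prime_and_dvd (mt Int.isUnit_iff_natAbs_eq.2 hunit)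
  exact ⟨p, hp, fun n hn =>
    (Int.natCast_dvd.2 hpg).trans ((Submodule.IsPrincipal.mem_iff_generator_dvd I).1 hn)⟩

section MultilinearPoly

variable {m : ℕ} (c : Equiv.Perm (Fin m) → ℤ)

def coeffSum : ℤ := ∑ σ, c σ

def theta (i j : Fin m) : ℤ :=
  ∑ σ ∈ univ.filter (fun σ : Equiv.Perm (Fin m) => σ⁻¹ i < σ⁻¹ j), c σ

variable (R : Type*) [Ring R]

noncomputable def multilinearPoly : MultilinearMap ℤ (fun _ : Fin m => R) R :=
  ∑ σ, c σ • (MultilinearMap.mkPiAlgebraFin ℤ m R).domDomCongr σ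

variable {c R}

@[simp]
theorem multilinearPoly_apply (r : Fin m → R) :
    multilinearPoly c R r = ∑ σ, c σ • (List.ofFn fun t => r (σ t)).prod := by
  simp [multilinearPoly]

theorem multilinearPoly_eq_zero_iff :
    multilinearPoly c R = 0 ↔
      ∀ r : Fin m → R, ∑ σ, c σ • (List.ofFn fun t => r (σ t)).prod = 0 := by
  simp [MultilinearMap.ext_iff]

theorem multilinearPoly_apply_of_forall_eq_one {r : Fin m → R} (h : ∀ k, r k = 1) :
    multilinearPoly c R r = coeffSum c • 1 := by
  simp [h, coeffSum, sum_smul]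

theorem multilinearPoly_apply_of_eq_one_of_ne {r : Fin m → R} {i : Fin m}
    (h : ∀ k, k ≠ i → r k = 1) :
    multilinearPoly c R r = coeffSum c • r i := by
  have hprod (σ : Equiv.Perm (Fin m)) : (List.ofFn fun t => r (σ t)).prod = r i := by
    rw [List.prod_ofFn_of_eq_one_of_ne (s := σ⁻¹ i) fun t ht => h _ ?_]
    · simp
    · rwa [Ne, ← Equiv.Perm.eq_inv_iff_eq]
  simp [hprod, coeffSum, sum_smul]

theorem multilinearPoly_apply_of_eq_one_of_ne_of_ne {r : Fin m → R} {i j : Fin m} (hij : i ≠ j)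
    (h : ∀ k, k ≠ i → k ≠ j → r k = 1) :
    multilinearPoly c R r =
      theta c i j • (r i * r j) + (coeffSum c - theta c i j) • (r j * r i) := by
  have hprod (σ : Equiv.Perm (Fin m)) : (List.ofFn fun t => r (σ t)).prod =
      if σ⁻¹ i < σ⁻¹ j then r i * r j else r j * r i := by
    rw [List.prod_ofFn_of_eq_one_of_ne_of_ne (s := σ⁻¹ i) (t := σ⁻¹ j) (by simpa using hij)
      fun t hi hj => h _ ?_ ?_]
    · simp
    · rwa [Ne, ← Equiv.Perm.eq_inv_iff_eq]
    · rwa [Ne, ← Equiv.Perm.eq_inv_iff_eq]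
  have hsplit : coeffSum c - theta c i j =
      ∑ σ ∈ univ.filter (fun σ : Equiv.Perm (Fin m) => ¬ σ⁻¹ i < σ⁻¹ j), c σ := by
    rw [coeffSum, theta, ← sum_filter_add_sum_filter_not univ (fun σ => σ⁻¹ i < σ⁻¹ j)]
    ring
  rw [hsplit]
  simp only [multilinearPoly_apply, hprod, smul_ite, sum_ite, theta, sum_smul]

theorem coeffSum_smul_eq_zero (h : multilinearPoly c R = 0) (x : R) : coeffSum c • x = 0 := by
  have h1 := multilinearPoly_apply_of_forall_eq_one (c := c) (r := fun _ => (1 : R)) fun _ => rfl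
  rw [h, zero_apply] at h1
  rw [← one_mul x, ← smul_mul_assoc, ← h1, zero_mul]

theorem theta_smul_commutator_eq_zero (h : multilinearPoly c R = 0) {i j : Fin m} (hij : i ≠ j)
    (x y : R) : theta c i j • (x * y - y * x) = 0 := by
  have h2 := multilinearPoly_apply_of_eq_one_of_ne_of_ne (c := c)
    (r := (Pi.mulSingle i x * Pi.mulSingle j y : Fin m → R)) hij fun k hi hj => by simp [hi, hj]
  simp only [h, zero_apply, Pi.mul_apply, Pi.mulSingle_eq_same,
    Pi.mulSingle_eq_of_ne hij, Pi.mulSingle_eq_of_ne hij.symm, mul_one, one_mul, sub_smul,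
    coeffSum_smul_eq_zero h, zero_sub] at h2
  rw [smul_sub, sub_eq_add_neg, ← h2]

theorem multilinearPoly_eq_zero_of_injective {S F : Type*} [Ring S] [FunLike F R S]
    [RingHomClass F R S] {f : F} (hf : Function.Injective f)
    (h : multilinearPoly c S = 0) : multilinearPoly c R = 0 :=
  MultilinearMap.ext fun r => hf <| by
    simpa [map_list_prod, List.map_ofFn, Function.comp_def] using DFunLike.congr_fun h (f ∘ r)

theorem exists_prime_dvd_of_multilinearPoly_eq_zero (h : multilinearPoly c R = 0) {a b : R}
    (hab : a * b ≠ b * a) :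
    ∃ p : ℕ, p.Prime ∧ (p : ℤ) ∣ coeffSum c ∧ ∀ i j, i < j → (p : ℤ) ∣ theta c i j := by
  obtain ⟨p, hp, hdvd⟩ := Int.exists_prime_forall_dvd_of_ne_top
    (I := Ideal.torsionOf ℤ R (a * b - b * a))
    (by rwa [Ne, Ideal.torsionOf_eq_top_iff, sub_eq_zero])
  exact ⟨p, hp, hdvd _ (coeffSum_smul_eq_zero h _),
    fun i j hij => hdvd _ (theta_smul_commutator_eq_zero h hij.ne a b)⟩

theorem multilinearPoly_apply_eq_zero_of_dvd {p : ℕ} [Module (ZMod p) R] {T : Set R}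
    (hT : ∀ x ∈ T, ∀ y ∈ T, ∀ z ∈ T, x * y * z = 0) (hS : (p : ℤ) ∣ coeffSum c)
    (hθ : ∀ i j, i < j → (p : ℤ) ∣ theta c i j) {r : Fin m → R}
    (hr : ∀ k, r k = 1 ∨ r k ∈ T) : multilinearPoly c R r = 0 := by
  have hzero {n : ℤ} (hn : (p : ℤ) ∣ n) (x : R) : n • x = 0 := by
    rw [← Int.cast_smul_eq_zsmul (ZMod p), (ZMod.intCast_zmod_eq_zero_iff_dvd n p).2 hn,
      zero_smul]
  have hpair {i j : Fin m} (hij : i < j) (h : ∀ k, k ≠ i → k ≠ j → r k = 1) :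
      multilinearPoly c R r = 0 := by
    rw [multilinearPoly_apply_of_eq_one_of_ne_of_ne hij.ne h, hzero (hθ i j hij),
      hzero (dvd_sub hS (hθ i j hij)), add_zero]
  set B : Set (Fin m) := {k | r k ≠ 1}
  have hone {k : Fin m} (hk : k ∉ B) : r k = 1 := not_not.1 hk
  obtain h0 | h1 | h2 | h3 : B.ncard = 0 ∨ B.ncard = 1 ∨ B.ncard = 2 ∨ 3 ≤ B.ncard := by omega
  · rw [(Set.ncard_eq_zero (s := B)).1 h0] at hone
    rw [multilinearPoly_apply_of_forall_eq_one fun k => hone (Set.notMem_empty k), hzero hS]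
  · obtain ⟨i, hi⟩ := Set.ncard_eq_one.1 h1
    rw [multilinearPoly_apply_of_eq_one_of_ne fun k hk => hone (by simpa [hi] using hk),
      hzero hS]
  · obtain ⟨i, j, hij, hB⟩ := Set.ncard_eq_two.1 h2
    have h (k : Fin m) (hi : k ≠ i) (hj : k ≠ j) : r k = 1 := hone (by simp [hB, hi, hj])
    rcases hij.lt_or_gt with hlt | hgt
    · exact hpair hlt h
    · exact hpair hgt fun k hj hi => h k hi hj
  · refine (multilinearPoly_apply r).trans (sum_eq_zero fun σ _ => ?_)
    rw [List.prod_ofFn_eq_zero_of_three_le_ncard hT (fun t => hr (σ t)), smul_zero]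
    rwa [← Set.ncard_preimage_of_injective_subset_range σ.injective (by simp)] at h3

end MultilinearPoly

namespace UVRing

variable (p : ℕ)

noncomputable def U : UVRing p := RingQuot.mkAlgHom (ZMod p) (relUV p) (ι (ZMod p) 0)

noncomputable def V : UVRing p := RingQuot.mkAlgHom (ZMod p) (relUV p) (ι (ZMod p) 1)

@[simp]
theorem U_mul_U : U p * U p = 0 := by
  simpa [U, sq] using RingQuot.mkAlgHom_rel (ZMod p) (show relUV p (ι (ZMod p) 0 ^ 2) 0 by
    simp [relUV])

@[simp]
theorem V_mul_V : V p * V p = 0 := by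
  simpa [V, sq] using RingQuot.mkAlgHom_rel (ZMod p) (show relUV p (ι (ZMod p) 1 ^ 2) 0 by
    simp [relUV])

@[simp]
theorem U_mul_V : U p * V p = 0 := by
  simpa [U, V] using RingQuot.mkAlgHom_rel (ZMod p)
    (show relUV p (ι (ZMod p) 0 * ι (ZMod p) 1) 0 by simp [relUV])

@[simp]
theorem U_mul_U_mul (x : UVRing p) : U p * (U p * x) = 0 := by rw [← mul_assoc]; simp

@[simp]
theorem V_mul_V_mul (x : UVRing p) : V p * (V p * x) = 0 := by rw [← mul_assoc]; simp

@[simp]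
theorem U_mul_V_mul (x : UVRing p) : U p * (V p * x) = 0 := by rw [← mul_assoc]; simp

theorem mul_mul_eq_zero :
    ∀ x ∈ ({U p, V p, V p * U p} : Set (UVRing p)), ∀ y ∈ ({U p, V p, V p * U p} : Set _),
      ∀ z ∈ ({U p, V p, V p * U p} : Set _), x * y * z = 0 := by
  simp only [Set.mem_insert_iff, Set.mem_singleton_iff]
  rintro _ (rfl | rfl | rfl) _ (rfl | rfl | rfl) _ (rfl | rfl | rfl) <;> simp [mul_assoc]

open scoped Pointwise in
theorem span_eq_top : Submodule.span ℤ (Set.range ![1, U p, V p, V p * U p]) = ⊤ := by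
  set b : Fin 4 → UVRing p := ![1, U p, V p, V p * U p]
  set S := Submodule.span (ZMod p) (Set.range b)
  have hb (k : Fin 4) : b k ∈ S := Submodule.subset_span ⟨k, rfl⟩
  have hmul {x y : UVRing p} (hx : x ∈ S) (hy : y ∈ S) : x * y ∈ S := by
    have hle : Submodule.span (ZMod p) (Set.range b * Set.range b) ≤ S := by
      rw [Submodule.span_le]
      rintro _ ⟨_, ⟨i, rfl⟩, _, ⟨j, rfl⟩, rfl⟩
      fin_cases i <;> fin_cases j <;> simp [b, mul_assoc] <;>
        first | exact zero_mem _ | exact hb 0 | exact hb 1 | exact hb 2 | exact hb 3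
    exact hle (Submodule.span_mul_span (ZMod p) (Set.range b) (Set.range b) ▸
      Submodule.mul_mem_mul hx hy)
  let A : Subalgebra (ZMod p) (UVRing p) := S.toSubalgebra (hb 0) fun _ _ => hmul
  have hA (x : UVRing p) : x ∈ A := by
    obtain ⟨y, rfl⟩ := RingQuot.mkAlgHom_surjective (ZMod p) (relUV p) x
    induction y using FreeAlgebra.induction with
    | grade0 r => rw [AlgHom.commutes]; exact A.algebraMap_mem r
    | grade1 i => fin_cases i; exacts [hb 1, hb 2]
    | mul y z hy hz => rw [map_mul]; exact A.mul_mem hy hz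
    | add y z hy hz => rw [map_add]; exact A.add_mem hy hz
  rw [← Submodule.restrictScalars_span ℤ (ZMod p) ZMod.intCast_surjective, eq_top_iff]
  exact fun x _ => hA x

theorem multilinearPoly_eq_zero {m : ℕ} {c : Equiv.Perm (Fin m) → ℤ}
    (hS : (p : ℤ) ∣ coeffSum c) (hθ : ∀ i j, i < j → (p : ℤ) ∣ theta c i j) :
    multilinearPoly c (UVRing p) = 0 := by
  refine MultilinearMap.eq_zero_of_span_eq_top (span_eq_top p) fun J =>
    multilinearPoly_apply_eq_zero_of_dvd (mul_mul_eq_zero p) hS hθ fun k => ?_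
  rw [Function.comp_apply]
  generalize J k = i
  fin_cases i <;> simp

noncomputable def toMatrix : UVRing p →ₐ[ZMod p] Matrix (Fin 3) (Fin 3) (ZMod p) :=
  RingQuot.liftAlgHom (ZMod p)
    ⟨FreeAlgebra.lift (ZMod p) ![Matrix.single 1 2 1, Matrix.single 0 1 1], by
      rintro _ _ ⟨rfl, rfl | rfl | rfl⟩ <;> simp [sq]⟩

theorem V_mul_U_ne_U_mul_V [Fact (1 < p)] : V p * U p ≠ U p * V p := by
  rw [U_mul_V]
  intro h
  have := congrArg (fun x => toMatrix p x 0 2) h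
  simp [toMatrix, U, V] at this

end UVRing

theorem multilinear_identity_noncomm_general (m : ℕ) (c : Equiv.Perm (Fin m) → ℤ) :
    ((∃ (R : Type u) (_ : Ring R), (∃ a b : R, a * b ≠ b * a) ∧
        ∀ r : Fin m → R,
          ∑ σ : Equiv.Perm (Fin m), c σ • (List.ofFn fun t => r (σ t)).prod = 0) ↔
      (∃ p : ℕ, p.Prime ∧
        ((p : ℤ) ∣ ∑ σ : Equiv.Perm (Fin m), c σ) ∧
        ∀ i j : Fin m, i < j →
          (p : ℤ) ∣ ∑ σ ∈ Finset.filter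
            (fun σ : Equiv.Perm (Fin m) => σ⁻¹ i < σ⁻¹ j) Finset.univ, c σ)) ∧
    ∀ p : ℕ, p.Prime →
      ((p : ℤ) ∣ ∑ σ : Equiv.Perm (Fin m), c σ) →
      (∀ i j : Fin m, i < j →
        (p : ℤ) ∣ ∑ σ ∈ Finset.filter
          (fun σ : Equiv.Perm (Fin m) => σ⁻¹ i < σ⁻¹ j) Finset.univ, c σ) →
      ∀ r : Fin m → UVRing p,
        ∑ σ : Equiv.Perm (Fin m), c σ • (List.ofFn fun t => r (σ t)).prod = 0 := by
  refine ⟨⟨fun ⟨R, _, ⟨a, b, hab⟩, hP⟩ =>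
    exists_prime_dvd_of_multilinearPoly_eq_zero (multilinearPoly_eq_zero_iff.2 hP) hab,
    fun ⟨p, hp, hS, hθ⟩ => ?_⟩,
    fun p _ hS hθ => multilinearPoly_eq_zero_iff.1 (UVRing.multilinearPoly_eq_zero p hS hθ)⟩
  have : Fact (1 < p) := ⟨hp.one_lt⟩
  exact ⟨ULift.{u} (UVRing p), inferInstance,
    ⟨ULift.up (UVRing.V p), ULift.up (UVRing.U p),
      fun h => UVRing.V_mul_U_ne_U_mul_V p (congrArg ULift.down h)⟩,
    multilinearPoly_eq_zero_iff.1 (multilinearPoly_eq_zero_of_injective ULift.ringEquiv.injective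
      (UVRing.multilinearPoly_eq_zero p hS hθ))⟩

/-- Theorem 1.2: a homogeneous multilinear polynomial
`P = Σ_σ c_σ X_{σ(1)}⋯X_{σ(m)}` is an identity for some noncommutative ring iff there is a
prime `p` dividing `P(1,…,1)` and all the `Θ_{i,j}(P)`; moreover, in that case `P` is an
identity for `𝔽_p⟨U,V⟩/(U², V², UV)`. -/
theorem multilinear_identity_noncomm (m : ℕ) (hm : 2 ≤ m) (c : Equiv.Perm (Fin m) → ℤ) :
    ((∃ (R : Type u) (_ : Ring R), (∃ a b : R, a * b ≠ b * a) ∧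
        ∀ r : Fin m → R,
          ∑ σ : Equiv.Perm (Fin m), c σ • (List.ofFn fun t => r (σ t)).prod = 0) ↔
      (∃ p : ℕ, p.Prime ∧
        ((p : ℤ) ∣ ∑ σ : Equiv.Perm (Fin m), c σ) ∧
        ∀ i j : Fin m, i < j →
          (p : ℤ) ∣ ∑ σ ∈ Finset.filter
            (fun σ : Equiv.Perm (Fin m) => σ⁻¹ i < σ⁻¹ j) Finset.univ, c σ)) ∧
    ∀ p : ℕ, p.Prime →
      ((p : ℤ) ∣ ∑ σ : Equiv.Perm (Fin m), c σ) →
      (∀ i j : Fin m, i < j →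
        (p : ℤ) ∣ ∑ σ ∈ Finset.filter
          (fun σ : Equiv.Perm (Fin m) => σ⁻¹ i < σ⁻¹ j) Finset.univ, c σ) →
      ∀ r : Fin m → UVRing p,
        ∑ σ : Equiv.Perm (Fin m), c σ • (List.ofFn fun t => r (σ t)).prod = 0 :=
  multilinear_identity_noncomm_general m c
end

section
/- If R is a ring such that x²y² + x⁴y² + xyxy = 0 for all x, y ∈ R, then R is commutative. -/
universe u

/-- Example 3.8: the identity `x²y² + x⁴y² + xyxy = 0` forces a ring to be commutative. -/
theorem commutative_of_example_identity (R : Type u) [Ring R]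
    (h : ∀ x y : R, x ^ 2 * y ^ 2 + x ^ 4 * y ^ 2 + x * y * x * y = 0) :
    ∀ x y : R, x * y = y * x := by
  have key : ∀ x y : R, x * y * x * y = x ^ 2 * y ^ 2 := by
    intro x y
    have h1 := h x 1
    have h2 := h x y
    have h3 : (x ^ 2 * 1 ^ 2 + x ^ 4 * 1 ^ 2 + x * 1 * x * 1) * y ^ 2 = 0 := by
      rw [h1, zero_mul]
    have h4 : x * y * x * y - x ^ 2 * y ^ 2 =
        (x ^ 2 * y ^ 2 + x ^ 4 * y ^ 2 + x * y * x * y) -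
        (x ^ 2 * 1 ^ 2 + x ^ 4 * 1 ^ 2 + x * 1 * x * 1) * y ^ 2 := by noncomm_ring
    rw [h2, h3, sub_zero] at h4
    exact sub_eq_zero.mp h4
  have key2 : ∀ x y : R, x * y * x = x ^ 2 * y := by
    intro x y
    have e : x * (y + 1) * x * (y + 1) - x ^ 2 * (y + 1) ^ 2 = 0 :=
      sub_eq_zero.mpr (key x (y + 1))
    have e' : x * y * x * y - x ^ 2 * y ^ 2 = 0 := sub_eq_zero.mpr (key x y)
    have h4 : x * y * x - x ^ 2 * y =
        (x * (y + 1) * x * (y + 1) - x ^ 2 * (y + 1) ^ 2) -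
        (x * y * x * y - x ^ 2 * y ^ 2) := by noncomm_ring
    rw [e, e', sub_zero] at h4
    exact sub_eq_zero.mp h4
  intro x y
  have e : (x + 1) * y * (x + 1) - (x + 1) ^ 2 * y = 0 :=
    sub_eq_zero.mpr (key2 (x + 1) y)
  have e' : x * y * x - x ^ 2 * y = 0 := sub_eq_zero.mpr (key2 x y)
  have h4 : y * x - x * y =
      ((x + 1) * y * (x + 1) - (x + 1) ^ 2 * y) - (x * y * x - x ^ 2 * y) := by
    noncomm_ring
  rw [e, e', sub_zero] at h4
  exact (sub_eq_zero.mp h4).symm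
end
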